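/- arXiv:math/0305378 — 2 statements merged into one kernel-verified Lean document; each statement's English description precedes it below -/
import Mathlib

section
/- Let T be a commutative local domain, h ∈ T nonzero, and Z = {(t_λ,t_μ) ∈ T×T : t_λ ≡ t_μ mod h}. Consider the Z-modules M_λ = T with Z acting via projection to the first coordinate, M_μ = T with Z acting via projection to the second coordinate, and P = Z as a module over itself. Then Hom_Z(M_λ, M_μ) = 0 and Hom_Z(M_μ, M_λ) = 0. -/
/-- The congruence subring `Z = {(t₁,t₂) ∈ T × T : t₁ ≡ t₂ mod h}`, viewed as a
`T`-subalgebra of `T × T` (in particular a subring), with `T` embedded diagonally. -/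
def Zr (T : Type*) [CommRing T] (h : T) : Subalgebra T (T × T) where
  carrier := {p | h ∣ p.1 - p.2}
  add_mem' {a b} ha hb := by
    have e : (a + b).1 - (a + b).2 = (a.1 - a.2) + (b.1 - b.2) := by
      simp only [Prod.fst_add, Prod.snd_add]; ring
    rw [Set.mem_setOf_eq, e]
    exact dvd_add ha hb
  mul_mem' {a b} ha hb := by
    have e : (a * b).1 - (a * b).2 = (a.1 - a.2) * b.1 + a.2 * (b.1 - b.2) := by
      simp only [Prod.fst_mul, Prod.snd_mul]; ring
    rw [Set.mem_setOf_eq, e]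
    exact dvd_add (ha.mul_right b.1) (hb.mul_left a.2)
  one_mem' := by simp [Set.mem_setOf_eq]
  zero_mem' := by simp [Set.mem_setOf_eq]
  algebraMap_mem' t := by simp [Set.mem_setOf_eq]

/-- For the `Z`-modules `M_λ = T` (action via the first projection) and
`M_μ = T` (action via the second projection), there are no nonzero `Z`-module
homomorphisms in either direction.  A `Z`-module homomorphism `M_λ → M_μ` is an additive
map `f : T → T` with `f (z₁ * t) = z₂ * f t` for all `(z₁, z₂) ∈ Z`, and similarly in
the other direction. -/
theorem stmt1 (T : Type*) [CommRing T] [IsLocalRing T] [IsDomain T] (h : T) (hh : h ≠ 0) :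
    (∀ f : T →+ T, (∀ z ∈ Zr T h, ∀ t : T, f (z.1 * t) = z.2 * f t) → f = 0) ∧
    (∀ f : T →+ T, (∀ z ∈ Zr T h, ∀ t : T, f (z.2 * t) = z.1 * f t) → f = 0) := by
  constructor
  · intro f hf; ext t
    have := hf ⟨0, h⟩ (show h ∣ (0:T) - h by simp) t
    simp only [zero_mul, map_zero] at this
    rcases mul_eq_zero.mp this.symm with h1 | h1
    · exact absurd h1 hh
    · exact h1
  · intro f hf; ext t
    have := hf ⟨h, 0⟩ (show h ∣ h - (0:T) by simp) t
    simp only [zero_mul, map_zero] at this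
    rcases mul_eq_zero.mp this.symm with h1 | h1
    · exact absurd h1 hh
    · exact h1
end

section
/- Let T be a commutative local domain, h ∈ T nonzero, Z = {(t_λ,t_μ) ∈ T×T : t_λ ≡ t_μ mod h}, M_λ = T with Z acting by first projection, and P = Z. Then Hom_Z(M_λ, P) is a free T-module of rank one generated by the map 1 ↦ (h, 0), and Hom_Z(P, M_λ) is free of rank one generated by (z_λ, z_μ) ↦ z_λ. -/
lemma mem_Zr {T : Type*} [CommRing T] {h : T} {p : T × T} :
    p ∈ Zr T h ↔ h ∣ p.1 - p.2 := Iff.rfl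

/-- `Hom_Z(M_λ, P)` is free of rank one over `T`, generated by the map
`1 ↦ (h, 0)` (so a general element is `t₀ · (1 ↦ (h,0))`, i.e. `t ↦ (t₀·h·t, 0)`), and
`Hom_Z(P, M_λ)` is free of rank one over `T`, generated by `(z₁, z₂) ↦ z₁`.  Here a
`Z`-module homomorphism `M_λ → P` is an additive map `f : T → T × T` with values in `Z`
satisfying `f (z₁ * t) = z * f t` for `z = (z₁, z₂) ∈ Z`, and a `Z`-module homomorphism
`P → M_λ` is an additive map `g : Z → T` with `g (z * w) = z₁ * g w`. -/
theorem stmt2 (T : Type*) [CommRing T] [IsLocalRing T] [IsDomain T] (h : T) (hh : h ≠ 0) :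
    (∀ f : T →+ (T × T), (∀ t : T, f t ∈ Zr T h) →
      (∀ z ∈ Zr T h, ∀ t : T, f (z.1 * t) = z * f t) →
      ∃! t₀ : T, ∀ t : T, f t = (t₀ * (h * t), 0)) ∧
    (∀ g : Zr T h →+ T, (∀ z w : Zr T h, g (z * w) = (z : T × T).1 * g w) →
      ∃! t₀ : T, ∀ z : Zr T h, g z = t₀ * (z : T × T).1) := by
  constructor
  · intro f hZ hlin
    have h0h : ((0 : T), h) ∈ Zr T h := by rw [mem_Zr]; simp
    have hsnd : ∀ t : T, (f t).2 = 0 := by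
      intro t
      have := hlin ((0 : T), h) h0h t
      simp only [zero_mul, map_zero] at this
      have h2 : (0 : T) = h * (f t).2 := congrArg Prod.snd this
      rcases mul_eq_zero.mp h2.symm with hc | hc
      · exact absurd hc hh
      · exact hc
    have hdiag : ∀ t : T, (f t).1 = t * (f 1).1 := by
      intro t
      have hmem : ((t : T), t) ∈ Zr T h := by rw [mem_Zr]; simp
      have := hlin (t, t) hmem 1
      simp only [mul_one] at this
      exact congrArg Prod.fst this
    have hdvd : h ∣ (f 1).1 := by
      have := mem_Zr.mp (hZ 1)
      simpa [hsnd 1] using this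
    obtain ⟨t₀, ht₀⟩ := hdvd
    refine ⟨t₀, fun t => ?_, fun t₁ ht₁ => ?_⟩
    · have : (f t).1 = t₀ * (h * t) := by rw [hdiag t, ht₀]; ring
      exact Prod.ext this (hsnd t)
    · have e1 := ht₁ 1
      have e2 : (f 1).1 = t₀ * (h * 1) := by rw [hdiag 1, ht₀]; ring
      have : t₁ * (h * 1) = t₀ * (h * 1) := by rw [← e2, e1]
      have hne : (h : T) * 1 ≠ 0 := by simpa using hh
      exact mul_right_cancel₀ hne this
  · intro g hlin
    refine ⟨g 1, fun z => ?_, fun t₁ ht₁ => ?_⟩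
    · have := hlin z 1
      simpa [mul_comm] using this
    · have := ht₁ 1
      simp at this
      exact this.symm
end
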